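/- arXiv:2504.08284 — 8 statements merged into one kernel-verified Lean document; each statement's English description precedes it below -/
import Mathlib

section
/- For every integer n ≥ 2 and every x ∈ [0,1), the polynomial M_n(x) = n² + (−2n² − 2n + 1)x + (n+1)²x² − x^{n+1} − x^{n+2} is strictly positive, i.e., M_n(x) > 0. -/
noncomputable def fS (n : ℕ) (x : ℝ) : ℝ := ∑ k ∈ Finset.range n, ((n:ℝ) - k)^2 * x^k

lemma fS_succ (n : ℕ) (x : ℝ) : fS (n+1) x = ((n:ℝ)+1)^2 + x * fS n x := by
  unfold fS
  rw [Finset.sum_range_succ', Finset.mul_sum]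
  push_cast
  rw [add_comm]
  congr 1
  · ring
  · exact Finset.sum_congr rfl fun k _ => by ring

lemma M_eq (n : ℕ) (x : ℝ) :
    (n : ℝ)^2 + (-(2*(n:ℝ)^2) - 2*(n:ℝ) + 1) * x + ((n:ℝ)+1)^2 * x^2
      - x^(n+1) - x^(n+2) = (1-x)^3 * fS n x := by
  induction n with
  | zero => simp [fS]
  | succ n ih =>
    rw [fS_succ]
    push_cast
    linear_combination x * ih

theorem M_pos (n : ℕ) (hn : 2 ≤ n) (x : ℝ) (hx0 : 0 ≤ x) (hx1 : x < 1) :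
    (n : ℝ)^2 + (-(2*(n:ℝ)^2) - 2*(n:ℝ) + 1) * x + ((n:ℝ)+1)^2 * x^2
      - x^(n+1) - x^(n+2) > 0 := by
  rw [M_eq]
  have h3 : (0:ℝ) < (1-x)^3 := pow_pos (by linarith) 3
  apply mul_pos h3
  unfold fS
  have hn' : (2:ℝ) ≤ n := by exact_mod_cast hn
  have h0 : (0:ℕ) ∈ Finset.range n := Finset.mem_range.mpr (by omega)
  have hterm := Finset.single_le_sum (f := fun k : ℕ => ((n:ℝ) - k)^2 * x^k)
    (fun k _ => mul_nonneg (sq_nonneg _) (pow_nonneg hx0 k)) h0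
  simp only [Nat.cast_zero, sub_zero, pow_zero, mul_one] at hterm
  nlinarith
end

section
/- For every integer n ≥ 2, the function φ_n(x) = M_n(x)/(1−x)³ is strictly increasing on [0,1), where M_n(x) = n² + (−2n² − 2n + 1)x + (n+1)²x² − x^{n+1} − x^{n+2}. -/
lemma phi_key (x : ℝ) (n : ℕ) :
    (n : ℝ)^2 + (-(2*(n:ℝ)^2) - 2*(n:ℝ) + 1) * x + ((n:ℝ)+1)^2 * x^2
      - x^(n+1) - x^(n+2)
    = (1 - x)^3 * ∑ k ∈ Finset.range n, ((n:ℝ) - k)^2 * x^k := by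
  induction n with
  | zero => simp
  | succ n ih =>
    rw [Finset.sum_range_succ']
    have h : ∑ k ∈ Finset.range n, ((↑(n+1):ℝ) - ↑(k+1))^2 * x^(k+1)
        = x * ∑ k ∈ Finset.range n, ((n:ℝ) - k)^2 * x^k := by
      rw [Finset.mul_sum]
      refine Finset.sum_congr rfl fun k _ => ?_
      push_cast; ring
    push_cast
    push_cast at h
    rw [h]
    push_cast at ih
    linear_combination x * ih

theorem phi_strictMono (n : ℕ) (hn : 2 ≤ n) :
    StrictMonoOn
      (fun x : ℝ =>
        ((n : ℝ)^2 + (-(2*(n:ℝ)^2) - 2*(n:ℝ) + 1) * x + ((n:ℝ)+1)^2 * x^2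
          - x^(n+1) - x^(n+2)) / (1 - x)^3)
      (Set.Ico (0:ℝ) 1) := by
  intro a ha b hb hab
  have hne : ∀ y : ℝ, y ∈ Set.Ico (0:ℝ) 1 → ((1:ℝ) - y)^3 ≠ 0 := by
    intro y hy
    have : (0:ℝ) < 1 - y := by linarith [hy.2]
    positivity
  simp only [phi_key]
  rw [mul_div_cancel_left₀ _ (hne a ha), mul_div_cancel_left₀ _ (hne b hb)]
  apply Finset.sum_lt_sum
  · intro k _
    have hk : a ^ k ≤ b ^ k := pow_le_pow_left₀ ha.1 hab.le k
    have : (0:ℝ) ≤ ((n:ℝ) - k)^2 := sq_nonneg _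
    nlinarith
  · refine ⟨1, Finset.mem_range.2 (by omega), ?_⟩
    have h1 : (0:ℝ) < ((n:ℝ) - 1)^2 := by
      have : (2:ℝ) ≤ (n:ℝ) := by exact_mod_cast hn
      nlinarith
    have h2 : a ^ 1 < b ^ 1 := by simpa using hab
    push_cast
    nlinarith
end

section
/- For every integer n ≥ 2, the function ψ_n(x) = x·M_{n−1}(x)/(1−x)³ is strictly increasing on [0,1), where M_m(x) = m² + (−2m² − 2m + 1)x + (m+1)²x² − x^{m+1} − x^{m+2}. -/
/-! The numerator factors as `M_m(x) = (1 - x)^3 ∑_{i<m} (m - i)^2 x^i`, so on `[0, 1)` the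
function is `x ∑_{i<m} (m - i)^2 x^i`: a polynomial with nonnegative coefficients whose linear
coefficient `m^2` is positive. -/

open Finset Set

noncomputable def sqWeightSum (m : ℕ) (x : ℝ) : ℝ :=
  ∑ i ∈ range m, ((m : ℝ) - i) ^ 2 * x ^ i

lemma sqWeightSum_succ (m : ℕ) (x : ℝ) :
    sqWeightSum (m + 1) x = ((m : ℝ) + 1) ^ 2 + x * sqWeightSum m x := by
  rw [sqWeightSum, sum_range_succ', add_comm, sqWeightSum, mul_sum]
  push_cast
  congr 1
  · ring
  · exact sum_congr rfl fun i _ => by ring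

lemma one_sub_pow_three_mul_sqWeightSum (m : ℕ) (x : ℝ) :
    (1 - x) ^ 3 * sqWeightSum m x
      = (m : ℝ) ^ 2 + (-(2 * (m : ℝ) ^ 2) - 2 * m + 1) * x + ((m : ℝ) + 1) ^ 2 * x ^ 2
          - x ^ (m + 1) - x ^ (m + 2) := by
  induction m with
  | zero => simp [sqWeightSum]
  | succ m ih =>
    rw [sqWeightSum_succ]
    push_cast
    linear_combination x * ih

lemma sqWeightSum_monotoneOn (m : ℕ) : MonotoneOn (sqWeightSum m) (Ici 0) :=
  fun _ hx _ _ hxy => sum_le_sum fun i _ =>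
    mul_le_mul_of_nonneg_left (pow_le_pow_left₀ hx hxy i) (sq_nonneg _)

lemma sqWeightSum_pos {m : ℕ} (hm : 0 < m) {x : ℝ} (hx : 0 ≤ x) : 0 < sqWeightSum m x :=
  sum_pos' (fun i _ => by positivity)
    ⟨0, mem_range.2 hm, by simpa using pow_pos (Nat.cast_pos.2 hm : (0 : ℝ) < m) 2⟩

lemma strictMonoOn_mul_sqWeightSum {m : ℕ} (hm : 0 < m) :
    StrictMonoOn (fun x => x * sqWeightSum m x) (Ici 0) := fun x hx y hy hxy =>
  calc x * sqWeightSum m x ≤ x * sqWeightSum m y :=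
        mul_le_mul_of_nonneg_left (sqWeightSum_monotoneOn m hx hy hxy.le) hx
    _ < y * sqWeightSum m y := mul_lt_mul_of_pos_right hxy (sqWeightSum_pos hm hy)

theorem psi_strictMono (n : ℕ) (hn : 2 ≤ n) :
    StrictMonoOn
      (fun x : ℝ =>
        x * (((n : ℝ) - 1)^2 + (-(2*((n:ℝ)-1)^2) - 2*((n:ℝ)-1) + 1) * x
          + (n:ℝ)^2 * x^2 - x^n - x^(n+1)) / (1 - x)^3)
      (Set.Ico (0:ℝ) 1) := by
  obtain ⟨m, rfl⟩ : ∃ m, n = m + 1 := ⟨n - 1, by omega⟩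
  refine (strictMonoOn_mul_sqWeightSum (by omega : 0 < m)).mono Ico_subset_Ici_self |>.congr ?_
  intro x hx
  have hx1 : (1 - x) ^ 3 ≠ 0 := pow_ne_zero _ (sub_ne_zero.2 hx.2.ne')
  rw [eq_div_iff hx1]
  push_cast
  linear_combination x * one_sub_pow_three_mul_sqWeightSum m x
end

section
/- For every integer n ≥ 2, the function D_n(x) = (n−1)² + (4−2n²)x + (n+1)²x² − (n+1)x^n − 4x^{n+1} + (n−1)x^{n+2} satisfies D_n(x) > 0 for all x ∈ [0,1) and D_n(1) = 0. -/
open Finset in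
lemma hV (m : ℕ) (x : ℝ) :
    (1-x)^2 * ∑ k ∈ range m, ((k:ℝ)+1) * x^k
      = 1 - ((m:ℝ)+1)*x^m + (m:ℝ)*x^(m+1) := by
  induction m with
  | zero => simp
  | succ m ih =>
    rw [Finset.sum_range_succ, mul_add, ih]
    push_cast
    ring

open Finset in
lemma hU (m : ℕ) (x : ℝ) :
    (1-x)^3 * ∑ k ∈ range m, ((k:ℝ)+1) * ((m:ℝ)-1-k) * x^k
      = ((m:ℝ)-1) - ((m:ℝ)+1)*x + ((m:ℝ)+1)*x^m - ((m:ℝ)-1)*x^(m+1) := by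
  induction m with
  | zero => simp; ring
  | succ m ih =>
    have key : ∑ k ∈ range (m+1), ((k:ℝ)+1) * (((m:ℝ)+1)-1-k) * x^k
        = ((∑ k ∈ range m, ((k:ℝ)+1) * ((m:ℝ)-1-k) * x^k) - ((m:ℝ)+1)*x^m)
          + ∑ k ∈ range (m+1), ((k:ℝ)+1) * x^k := by
      have step : ∑ k ∈ range (m+1), ((k:ℝ)+1) * (((m:ℝ)+1)-1-k) * x^k
          = ∑ k ∈ range (m+1), (((k:ℝ)+1) * ((m:ℝ)-1-k) * x^k + ((k:ℝ)+1) * x^k) := by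
        apply Finset.sum_congr rfl
        intro k _
        ring
      rw [step, Finset.sum_add_distrib, Finset.sum_range_succ
        (f := fun k => ((k:ℝ)+1) * ((m:ℝ)-1-k) * x^k)]
      ring
    push_cast
    rw [key]
    have hv := hV (m+1) x
    push_cast at hv
    have h3 : (1-x)^3 * ∑ k ∈ range (m+1), ((k:ℝ)+1) * x^k
        = (1-x) * (1 - ((m:ℝ)+1+1)*x^(m+1) + ((m:ℝ)+1)*x^(m+1+1)) := by
      rw [← hv]; ring
    rw [mul_add, h3, mul_sub, ih]
    ring

open Finset in
lemma hS (m : ℕ) (x : ℝ) :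
    (1-x)^4 * ∑ k ∈ range m, ((k:ℝ)+1) * ((m:ℝ)-k)^2 * x^k
      = (m:ℝ)^2 + (4 - 2*((m:ℝ)+1)^2)*x + ((m:ℝ)+2)^2*x^2
        - ((m:ℝ)+2)*x^(m+1) - 4*x^(m+2) + (m:ℝ)*x^(m+3) := by
  induction m with
  | zero => simp; ring
  | succ m ih =>
    have key : ∑ k ∈ range (m+1), ((k:ℝ)+1) * (((m:ℝ)+1)-k)^2 * x^k
        = (∑ k ∈ range m, ((k:ℝ)+1) * ((m:ℝ)-k)^2 * x^k)
          + 2 * (∑ k ∈ range (m+1), ((k:ℝ)+1) * (((m:ℝ)+1)-1-k) * x^k)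
          + ∑ k ∈ range (m+1), ((k:ℝ)+1) * x^k := by
      have step : ∑ k ∈ range (m+1), ((k:ℝ)+1) * (((m:ℝ)+1)-k)^2 * x^k
          = ∑ k ∈ range (m+1), (((k:ℝ)+1) * ((m:ℝ)-k)^2 * x^k
              + 2 * (((k:ℝ)+1) * (((m:ℝ)+1)-1-k) * x^k) + ((k:ℝ)+1) * x^k) := by
        apply Finset.sum_congr rfl
        intro k _
        ring
      rw [step, Finset.sum_add_distrib, Finset.sum_add_distrib, Finset.sum_range_succ
        (f := fun k => ((k:ℝ)+1) * ((m:ℝ)-k)^2 * x^k), ← Finset.mul_sum]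
      ring
    push_cast
    rw [key, mul_add, mul_add, ih]
    have hu := hU (m+1) x
    push_cast at hu
    have hv := hV (m+1) x
    push_cast at hv
    have h2 : (1-x)^4 * (2 * ∑ k ∈ range (m+1), ((k:ℝ)+1) * (((m:ℝ)+1)-1-k) * x^k)
        = 2 * (1-x) * (((m:ℝ)+1-1) - ((m:ℝ)+1+1)*x
            + ((m:ℝ)+1+1)*x^(m+1) - ((m:ℝ)+1-1)*x^(m+1+1)) := by
      rw [← hu]; ring
    have h3 : (1-x)^4 * ∑ k ∈ range (m+1), ((k:ℝ)+1) * x^k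
        = (1-x)^2 * (1 - ((m:ℝ)+1+1)*x^(m+1) + ((m:ℝ)+1)*x^(m+1+1)) := by
      rw [← hv]; ring
    rw [h2, h3]
    ring

theorem D_pos (n : ℕ) (hn : 2 ≤ n) :
    (∀ x : ℝ, 0 ≤ x → x < 1 →
      ((n:ℝ)-1)^2 + (4 - 2*(n:ℝ)^2) * x + ((n:ℝ)+1)^2 * x^2
        - ((n:ℝ)+1) * x^n - 4 * x^(n+1) + ((n:ℝ)-1) * x^(n+2) > 0) ∧
    ((n:ℝ)-1)^2 + (4 - 2*(n:ℝ)^2) * (1:ℝ) + ((n:ℝ)+1)^2 * (1:ℝ)^2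
        - ((n:ℝ)+1) * (1:ℝ)^n - 4 * (1:ℝ)^(n+1) + ((n:ℝ)-1) * (1:ℝ)^(n+2) = 0 := by
  constructor
  · intro x hx0 hx1
    obtain ⟨m, rfl⟩ : ∃ m, n = m + 1 := ⟨n - 1, (Nat.succ_pred_eq_of_pos (by omega)).symm⟩
    have hm : 1 ≤ m := by omega
    have hid := hS m x
    have goal_eq : (((m+1:ℕ):ℝ)-1)^2 + (4 - 2*((m+1:ℕ):ℝ)^2) * x + (((m+1:ℕ):ℝ)+1)^2 * x^2
        - (((m+1:ℕ):ℝ)+1) * x^(m+1) - 4 * x^(m+1+1) + (((m+1:ℕ):ℝ)-1) * x^(m+1+2)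
        = (1-x)^4 * ∑ k ∈ Finset.range m, ((k:ℝ)+1) * ((m:ℝ)-k)^2 * x^k := by
      rw [hid]; push_cast; ring
    rw [goal_eq]
    apply mul_pos
    · exact pow_pos (by linarith) 4
    · apply Finset.sum_pos'
      · intro k _
        exact mul_nonneg (mul_nonneg (by positivity) (sq_nonneg _)) (pow_nonneg hx0 k)
      · refine ⟨0, Finset.mem_range.mpr (by omega), ?_⟩
        have hm' : (1:ℝ) ≤ (m:ℝ) := by exact_mod_cast hm
        simp only [Nat.cast_zero, pow_zero]
        nlinarith
  · simp
    ring
end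

section
/- For every integer n ≥ 2, the function G_n(x) = L_n(x)/(1−x)² is strictly increasing on [0,1), where L_n(x) = n − (n+1)x + x^{n+1}. -/
lemma key_sum (n : ℕ) (x : ℝ) :
    (∑ j ∈ Finset.range n, ((n : ℝ) - j) * x ^ j) * (1 - x) ^ 2
      = (n : ℝ) - ((n:ℝ)+1) * x + x ^ (n+1) := by
  induction n with
  | zero => simp
  | succ m ih =>
    have h1 : ∑ j ∈ Finset.range (m+1), (((m:ℝ)+1) - j) * x ^ j
        = (∑ j ∈ Finset.range m, ((m : ℝ) - j) * x ^ j)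
          + ∑ j ∈ Finset.range (m+1), x ^ j := by
      have e : ∀ j ∈ Finset.range (m+1),
          (((m:ℝ)+1) - j) * x ^ j = ((m:ℝ) - j) * x ^ j + x ^ j := fun j _ => by ring
      rw [Finset.sum_congr rfl e, Finset.sum_add_distrib, Finset.sum_range_succ _ m]
      simp
    have hg : (∑ j ∈ Finset.range (m+1), x ^ j) * (x - 1) = x ^ (m+1) - 1 :=
      geom_sum_mul x (m+1)
    push_cast
    push_cast at h1
    rw [h1]
    linear_combination ih + (x - 1) * hg

theorem G_strictMono (n : ℕ) (hn : 2 ≤ n) :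
    StrictMonoOn
      (fun x : ℝ => ((n : ℝ) - ((n:ℝ)+1) * x + x^(n+1)) / (1 - x)^2)
      (Set.Ico (0:ℝ) 1) := by
  intro x hx y hy hxy
  have hx1 : (1 - x) ^ 2 ≠ 0 := by
    have : (0:ℝ) < 1 - x := by linarith [hx.2]
    positivity
  have hy1 : (1 - y) ^ 2 ≠ 0 := by
    have : (0:ℝ) < 1 - y := by linarith [hy.2]
    positivity
  have ex : ((n : ℝ) - ((n:ℝ)+1) * x + x^(n+1)) / (1 - x)^2
      = ∑ j ∈ Finset.range n, ((n : ℝ) - j) * x ^ j := by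
    rw [eq_comm, eq_div_iff hx1, key_sum]
  have ey : ((n : ℝ) - ((n:ℝ)+1) * y + y^(n+1)) / (1 - y)^2
      = ∑ j ∈ Finset.range n, ((n : ℝ) - j) * y ^ j := by
    rw [eq_comm, eq_div_iff hy1, key_sum]
  simp only [ex, ey]
  apply Finset.sum_lt_sum
  · intro j hj
    have hcoef : (0:ℝ) ≤ (n : ℝ) - j := by
      have : j < n := Finset.mem_range.mp hj
      have : (j:ℝ) < n := by exact_mod_cast this
      linarith
    exact mul_le_mul_of_nonneg_left (pow_le_pow_left₀ hx.1 hxy.le j) hcoef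
  · refine ⟨1, Finset.mem_range.mpr (by omega), ?_⟩
    have h2 : (2:ℝ) ≤ n := by exact_mod_cast hn
    push_cast
    simp only [pow_one]
    nlinarith [hxy]
end

section
/- For every integer n ≥ 2, the function H_n(x) = x·L_{n−1}(x)/(1−x)² is strictly increasing on [0,1), where L_m(x) = m − (m+1)x + x^{m+1}. -/
lemma key_factor (m : ℕ) (x : ℝ) :
    (1 - x)^2 * ∑ k ∈ Finset.range m, ((m - k : ℕ) : ℝ) * x^(k+1)
      = x * ((m : ℝ) - ((m : ℝ) + 1) * x + x^(m+1)) := by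
  induction m with
  | zero => simp
  | succ m ih =>
    have h1 : ∀ k ∈ Finset.range (m+1),
        ((m + 1 - k : ℕ) : ℝ) * x^(k+1) = ((m - k : ℕ) : ℝ) * x^(k+1) + x^(k+1) := by
      intro k hk
      have hk' : m + 1 - k = (m - k) + 1 := by
        simp only [Finset.mem_range] at hk; omega
      rw [hk']; push_cast; ring
    have h3 : (x - 1) * ∑ k ∈ Finset.range (m+1), x^k = x^(m+1) - 1 := by
      rw [mul_comm]; exact geom_sum_mul x (m+1)
    have h2 : (∑ k ∈ Finset.range (m+1), x^(k+1))
        = x * ∑ k ∈ Finset.range (m+1), x^k := by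
      rw [Finset.mul_sum]; exact Finset.sum_congr rfl (fun k _ => by ring)
    rw [Finset.sum_congr rfl h1, Finset.sum_add_distrib, Finset.sum_range_succ,
      Nat.sub_self, h2]
    push_cast
    linear_combination ih - x * (1 - x) * h3

theorem H_strictMono (n : ℕ) (hn : 2 ≤ n) :
    StrictMonoOn
      (fun x : ℝ => x * (((n : ℝ) - 1) - (n:ℝ) * x + x^n) / (1 - x)^2)
      (Set.Ico (0:ℝ) 1) := by
  set S : ℝ → ℝ := fun x => ∑ k ∈ Finset.range (n-1), ((n - 1 - k : ℕ) : ℝ) * x^(k+1)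
    with hSdef
  have heq : ∀ x ∈ Set.Ico (0:ℝ) 1,
      x * (((n : ℝ) - 1) - (n:ℝ) * x + x^n) / (1 - x)^2 = S x := by
    intro x hx
    have hx1 : (1 : ℝ) - x ≠ 0 := by
      have := hx.2; intro h; linarith
    have hkey := key_factor (n-1) x
    have hc : ((n - 1 : ℕ) : ℝ) = (n : ℝ) - 1 := by
      have : 1 ≤ n := by omega
      push_cast [Nat.cast_sub this]; ring
    have he : n - 1 + 1 = n := by omega
    rw [hc, he] at hkey
    rw [div_eq_iff (pow_ne_zero 2 hx1)]
    linear_combination -hkey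
  intro a ha b hb hab
  simp only
  rw [heq a ha, heq b hb, hSdef]
  have hne : (Finset.range (n-1)).Nonempty := by
    rw [Finset.nonempty_range_iff]; omega
  refine Finset.sum_lt_sum_of_nonempty hne ?_
  intro k hk
  have hkm : k < n - 1 := Finset.mem_range.mp hk
  have hcpos : (0 : ℝ) < ((n - 1 - k : ℕ) : ℝ) := by
    have : 0 < n - 1 - k := by omega
    exact_mod_cast this
  have hpow : a^(k+1) < b^(k+1) :=
    pow_lt_pow_left₀ hab ha.1 (Nat.succ_ne_zero k)
  exact mul_lt_mul_of_pos_left hpow hcpos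
end

section
/- For integer n ≥ 2, the limit as k → 1⁻ of B(n,k) = k((n−1)² + (−2n² + 2n + 1)k + n²k² − k^n − k^{n+1})/(n(1−k)³) equals (2n−1)(n−1)/6. -/
open Finset

private lemma poly_id (m : ℕ) (k : ℝ) :
    (m:ℝ)^2 + (-(2*((m:ℝ)+1)^2) + 2*((m:ℝ)+1) + 1) * k + ((m:ℝ)+1)^2 * k^2
      - k^(m+1) - k^(m+2)
    = (1-k)^3 * ∑ i ∈ range m, ((m:ℝ) - i)^2 * k^i := by
  induction m with
  | zero => simp
  | succ m ih =>
    rw [Finset.sum_range_succ']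
    push_cast
    have h : ∀ i ∈ range m, (((m:ℝ)+1) - ((i:ℝ)+1))^2 * k^(i+1)
        = k * (((m:ℝ) - i)^2 * k^i) := by
      intro i _; rw [pow_succ]; ring
    rw [Finset.sum_congr rfl h, ← Finset.mul_sum]
    have hk1 : k^(m+2) = k * k^(m+1) := by rw [pow_succ]; ring
    have hk2 : k^(m+3) = k * k^(m+2) := by rw [pow_succ]; ring
    push_cast at ih
    rw [hk1] at ih
    rw [hk2, hk1]
    linear_combination k * ih

private lemma sum_sq (m : ℕ) :
    ∑ i ∈ range m, ((m:ℝ) - i)^2 = m * (m+1) * (2*m+1) / 6 := by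
  induction m with
  | zero => simp
  | succ m ih =>
    rw [Finset.sum_range_succ']
    have h : ∀ i ∈ range m, (((m:ℝ)+1) - ((i:ℝ)+1))^2 = ((m:ℝ) - i)^2 := by
      intro i _; ring
    push_cast
    rw [Finset.sum_congr rfl h, ih]
    ring

theorem B_limit (n : ℕ) (hn : 2 ≤ n) :
    Filter.Tendsto
      (fun k : ℝ =>
        k * (((n:ℝ)-1)^2 + (-(2*(n:ℝ)^2) + 2*(n:ℝ) + 1) * k + (n:ℝ)^2 * k^2
          - k^n - k^(n+1)) / ((n:ℝ) * (1 - k)^3))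
      (nhdsWithin 1 (Set.Iio 1))
      (nhds ((2*(n:ℝ)-1) * ((n:ℝ)-1) / 6)) := by
  obtain ⟨m, rfl⟩ : ∃ m, n = m + 1 := ⟨n - 1, by omega⟩
  have hm1 : ((m:ℝ) + 1) ≠ 0 := by positivity
  have hcont : Filter.Tendsto
      (fun k : ℝ => k * (∑ i ∈ range m, ((m:ℝ) - i)^2 * k^i) / ((m:ℝ)+1))
      (nhdsWithin 1 (Set.Iio 1))
      (nhds ((2*((m:ℝ)+1)-1) * (((m:ℝ)+1)-1) / 6)) := by
    have hc : Continuous (fun k : ℝ =>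
        k * (∑ i ∈ range m, ((m:ℝ) - i)^2 * k^i) / ((m:ℝ)+1)) := by
      fun_prop
    have h2 := (hc.tendsto 1).mono_left (nhdsWithin_le_nhds (s := Set.Iio 1))
    convert h2 using 2
    simp only [one_pow, mul_one, one_mul]
    rw [sum_sq]
    field_simp
    ring
  push_cast
  refine hcont.congr' ?_
  filter_upwards [self_mem_nhdsWithin] with k hk
  have hk1 : (1 - k) ≠ 0 := by
    simp only [Set.mem_Iio] at hk; intro h; nlinarith
  have key := poly_id m k
  rw [div_eq_div_iff hm1 (mul_ne_zero hm1 (pow_ne_zero 3 hk1))]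
  linear_combination (-(k * ((m:ℝ)+1))) * key
end

section
/- If φ(z) = c₀ + c₁z + c₂z² + ⋯ is analytic on the unit disk with Re φ(z) > 0 for all |z| < 1, then |c_n| ≤ 2·Re(c₀) for every n ≥ 1. -/
/-! On the circle `|z| = r < 1` the function `g θ = φ (r e^{iθ})` is the absolutely convergent
trigonometric series `∑ c_m r^m e^{imθ}`, so integrating term by term, the `n`-th Fourier
coefficient of `g` is `c_n r^n`, while for `n ≥ 1` that of `conj g = ∑ conj c_m r^m e^{-imθ}`
vanishes. Adding the two, `2π c_n r^n = ∫ 2 Re g(θ) e^{-inθ} dθ`, and since `Re g > 0` its modulus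
is at most `∫ 2 Re g = 4π Re c_0`. Letting `r → 1` gives the bound. -/

open Complex Filter Topology
open scoped Real ComplexConjugate

theorem summable_norm_mul_pow_of_summable {𝕜 : Type*} [NormedField 𝕜] {c : ℕ → 𝕜} {w : 𝕜}
    (hw : Summable fun m => c m * w ^ m) {r : ℝ} (hr0 : 0 ≤ r) (hr : r < ‖w‖) :
    Summable fun m => ‖c m‖ * r ^ m := by
  have hw0 : 0 < ‖w‖ := hr0.trans_lt hr
  obtain ⟨C, hC⟩ := hw.tendsto_atTop_zero.norm.bddAbove_range
  refine .of_nonneg_of_le (fun m => by positivity) (fun m => ?_)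
    ((summable_geometric_of_lt_one (by positivity) ((div_lt_one hw0).2 hr)).mul_left C)
  calc ‖c m‖ * r ^ m = ‖c m * w ^ m‖ * (r / ‖w‖) ^ m := by
        rw [norm_mul, norm_pow, div_pow]; field_simp
    _ ≤ C * (r / ‖w‖) ^ m := by gcongr; exact hC ⟨m, rfl⟩

theorem integral_exp_int_mul_I (k : ℤ) :
    ∫ θ : ℝ in 0..2 * π, exp (k * θ * I) = if k = 0 then (2 * π : ℂ) else 0 := by
  split_ifs with hk
  · simp [hk]
  · have hkI : (k : ℂ) * I ≠ 0 := mul_ne_zero (by exact_mod_cast hk) I_ne_zero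
    simp_rw [mul_right_comm (k : ℂ) _ I]
    rw [integral_exp_mul_complex hkI, div_eq_zero_iff, sub_eq_zero]
    left
    have : (k : ℂ) * I * ((2 * π : ℝ) : ℂ) = k * (2 * π * I) := by push_cast; ring
    rw [this, exp_int_mul_two_pi_mul_I]
    simp

theorem norm_mul_exp_int_mul_I (z : ℂ) (j : ℤ) (θ : ℝ) : ‖z * exp (j * θ * I)‖ = ‖z‖ := by
  rw [norm_mul, ← ofReal_intCast, ← ofReal_mul, norm_exp_ofReal_mul_I, mul_one]

section TrigonometricSeries

variable {a : ℕ → ℂ} {k : ℕ → ℤ} {f : ℝ → ℂ}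

theorem continuous_of_hasSum_mul_exp (ha : Summable fun m => ‖a m‖)
    (hf : ∀ θ : ℝ, HasSum (fun m => a m * exp (k m * θ * I)) (f θ)) : Continuous f := by
  rw [show f = fun θ : ℝ => ∑' m, a m * exp (k m * θ * I) from funext fun θ => (hf θ).tsum_eq.symm]
  exact continuous_tsum (fun m => by fun_prop) ha fun m θ => (norm_mul_exp_int_mul_I _ _ _).le

theorem hasSum_integral_of_hasSum_mul_exp (ha : Summable fun m => ‖a m‖)
    (hf : ∀ θ : ℝ, HasSum (fun m => a m * exp (k m * θ * I)) (f θ)) :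
    HasSum (fun m => if k m = 0 then 2 * π * a m else 0) (∫ θ in 0..2 * π, f θ) := by
  have hint : ∀ m, ∫ θ : ℝ in 0..2 * π, a m * exp (k m * θ * I) =
      if k m = 0 then 2 * π * a m else 0 := by
    intro m
    rw [intervalIntegral.integral_const_mul, integral_exp_int_mul_I]
    split_ifs <;> ring
  simp only [← hint]
  exact intervalIntegral.hasSum_integral_of_dominated_convergence (fun m _ => ‖a m‖)
    (fun m => by fun_prop) (fun m => .of_forall fun θ _ => (norm_mul_exp_int_mul_I _ _ _).le)
    (.of_forall fun _ _ => ha) intervalIntegrable_const (.of_forall fun θ _ => hf θ)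

end TrigonometricSeries

theorem ofReal_mul_exp_mem_ball {r : ℝ} (hr0 : 0 ≤ r) (hr1 : r < 1) (θ : ℝ) :
    (r : ℂ) * exp (θ * I) ∈ Metric.ball (0 : ℂ) 1 := by
  simpa [norm_exp_ofReal_mul_I, abs_of_nonneg hr0] using hr1

section CircleOfRadius

variable {φ : ℂ → ℂ} {c : ℕ → ℂ} {r : ℝ}

theorem summable_norm_coeff_mul_pow
    (hsum : ∀ z ∈ Metric.ball (0 : ℂ) 1, HasSum (fun n => c n * z ^ n) (φ z))
    (hr0 : 0 ≤ r) (hr1 : r < 1) : Summable fun m => ‖c m * (r : ℂ) ^ m‖ := by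
  obtain ⟨s, hrs, hs1⟩ := exists_between hr1
  have hs0 : 0 ≤ s := hr0.trans hrs.le
  have hs : (s : ℂ) ∈ Metric.ball (0 : ℂ) 1 := by simpa [abs_of_nonneg hs0] using hs1
  have := summable_norm_mul_pow_of_summable (hsum _ hs).summable hr0
    (by simpa [abs_of_nonneg hs0] using hrs)
  simpa [abs_of_nonneg hr0] using this

theorem hasSum_mul_exp_of_mem_circle
    (hsum : ∀ z ∈ Metric.ball (0 : ℂ) 1, HasSum (fun n => c n * z ^ n) (φ z))
    (hr0 : 0 ≤ r) (hr1 : r < 1) (θ : ℝ) :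
    HasSum (fun m => c m * (r : ℂ) ^ m * exp ((m : ℤ) * θ * I)) (φ (r * exp (θ * I))) := by
  convert hsum _ (ofReal_mul_exp_mem_ball hr0 hr1 θ) using 1
  ext m
  rw [mul_pow, ← Complex.exp_nat_mul]
  push_cast
  ring_nf

theorem integral_circle_mul_exp_neg
    (hsum : ∀ z ∈ Metric.ball (0 : ℂ) 1, HasSum (fun n => c n * z ^ n) (φ z))
    (hr0 : 0 ≤ r) (hr1 : r < 1) (n : ℕ) :
    ∫ θ : ℝ in 0..2 * π, φ (r * exp (θ * I)) * exp ((-n : ℤ) * θ * I) = 2 * π * (c n * r ^ n) := by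
  have h := hasSum_integral_of_hasSum_mul_exp (k := fun m => (m : ℤ) - n)
    (summable_norm_coeff_mul_pow hsum hr0 hr1) fun θ => by
      refine ((hasSum_mul_exp_of_mem_circle hsum hr0 hr1 θ).mul_right
        (exp ((-n : ℤ) * θ * I))).congr_fun fun m => ?_
      rw [mul_assoc _ (exp _), ← Complex.exp_add]
      push_cast
      ring_nf
  rw [h.unique (hasSum_single n fun m hm => if_neg (by omega)), sub_self, if_pos rfl]

theorem integral_conj_circle_mul_exp_neg
    (hsum : ∀ z ∈ Metric.ball (0 : ℂ) 1, HasSum (fun n => c n * z ^ n) (φ z))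
    (hr0 : 0 ≤ r) (hr1 : r < 1) {n : ℕ} (hn : 1 ≤ n) :
    ∫ θ : ℝ in 0..2 * π, conj (φ (r * exp (θ * I))) * exp ((-n : ℤ) * θ * I) = 0 := by
  have h := hasSum_integral_of_hasSum_mul_exp (k := fun m => -((m : ℤ) + n))
    (a := fun m => conj (c m * (r : ℂ) ^ m))
    (by simpa only [norm_conj] using summable_norm_coeff_mul_pow hsum hr0 hr1) fun θ => by
      refine (((hasSum_mul_exp_of_mem_circle hsum hr0 hr1 θ).map conj continuous_conj).mul_right
        (exp ((-n : ℤ) * θ * I))).congr_fun fun m => ?_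
      simp only [Function.comp_apply, map_mul, map_pow, ← exp_conj, conj_ofReal, conj_I,
        map_intCast]
      rw [mul_assoc _ (exp _), ← Complex.exp_add]
      push_cast
      ring_nf
  refine h.unique ?_
  convert hasSum_zero with m
  exact if_neg (by omega)

theorem norm_coeff_mul_pow_le_of_re_pos
    (hsum : ∀ z ∈ Metric.ball (0 : ℂ) 1, HasSum (fun n => c n * z ^ n) (φ z))
    (hre : ∀ z ∈ Metric.ball (0 : ℂ) 1, 0 < (φ z).re)
    (hr0 : 0 ≤ r) (hr1 : r < 1) {n : ℕ} (hn : 1 ≤ n) :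
    ‖c n‖ * r ^ n ≤ 2 * (c 0).re := by
  set g : ℝ → ℂ := fun θ => φ (r * exp (θ * I))
  have hg : Continuous g := continuous_of_hasSum_mul_exp (summable_norm_coeff_mul_pow hsum hr0 hr1)
    (hasSum_mul_exp_of_mem_circle hsum hr0 hr1)
  have hpos : ∀ θ, 0 < (g θ).re := fun θ => hre _ (ofReal_mul_exp_mem_ball hr0 hr1 θ)
  have hmean : ∫ θ in 0..2 * π, g θ = 2 * π * c 0 := by
    simpa using integral_circle_mul_exp_neg hsum hr0 hr1 0
  have hcoeff : ∫ θ : ℝ in 0..2 * π, ((2 * (g θ).re : ℝ) : ℂ) * exp ((-n : ℤ) * θ * I) =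
      2 * π * (c n * r ^ n) := by
    simp_rw [← add_conj, add_mul]
    rw [intervalIntegral.integral_add ((by fun_prop : Continuous _).intervalIntegrable _ _)
      ((by fun_prop : Continuous _).intervalIntegrable _ _),
      integral_circle_mul_exp_neg hsum hr0 hr1, integral_conj_circle_mul_exp_neg hsum hr0 hr1 hn,
      add_zero]
  have hmean_re : ∫ θ in 0..2 * π, (g θ).re = 2 * π * (c 0).re := by
    have h := intervalIntegral.intervalIntegral_re
      (hg.intervalIntegrable (μ := MeasureTheory.volume) 0 (2 * π))
    simp only [RCLike.re_to_complex] at h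
    rw [h, hmean, ← ofReal_ofNat, ← ofReal_mul, re_ofReal_mul]
  have key : 2 * π * (‖c n‖ * r ^ n) ≤ 2 * π * (2 * (c 0).re) :=
    calc 2 * π * (‖c n‖ * r ^ n)
        = ‖∫ θ : ℝ in 0..2 * π, ((2 * (g θ).re : ℝ) : ℂ) * exp ((-n : ℤ) * θ * I)‖ := by
          rw [hcoeff]; simp [abs_of_nonneg hr0, abs_of_pos Real.pi_pos]
      _ ≤ ∫ θ in 0..2 * π, 2 * (g θ).re := by
          refine (intervalIntegral.norm_integral_le_integral_norm (by positivity)).trans_eq ?_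
          refine intervalIntegral.integral_congr fun θ _ => ?_
          rw [norm_mul_exp_int_mul_I, norm_real, Real.norm_of_nonneg (by linarith [hpos θ])]
      _ = 2 * π * (2 * (c 0).re) := by
          rw [intervalIntegral.integral_const_mul, hmean_re]
          ring
  exact le_of_mul_le_mul_left key (by positivity)

end CircleOfRadius

theorem caratheodory_coeff (φ : ℂ → ℂ) (c : ℕ → ℂ)
    (hsum : ∀ z ∈ Metric.ball (0:ℂ) 1, HasSum (fun n => c n * z^n) (φ z))
    (hre : ∀ z ∈ Metric.ball (0:ℂ) 1, 0 < (φ z).re) :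
    ∀ n : ℕ, 1 ≤ n → ‖c n‖ ≤ 2 * (c 0).re := by
  intro n hn
  have hlim : Tendsto (fun r : ℝ => ‖c n‖ * r ^ n) (𝓝[<] 1) (𝓝 (‖c n‖ * 1 ^ n)) :=
    ((continuous_const.mul (continuous_pow n)).tendsto 1).mono_left nhdsWithin_le_nhds
  refine le_of_tendsto (by simpa using hlim) ?_
  filter_upwards [Ioo_mem_nhdsLT (show (0 : ℝ) < 1 from one_pos)] with r hr
  exact norm_coeff_mul_pow_le_of_re_pos hsum hre hr.1.le hr.2 hn
end
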